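/- If a, b lie in the same shell Sᵢ with ‖a‖ ≥ ‖b‖ and ‖a‖ − ‖b‖ ≥ ‖a−b‖/5, then with φ as in the gluing construction, ‖φ(a) − φ(b)‖ ≥ ‖a‖ − ‖b‖ ≥ ‖a−b‖/5. -/

import Mathlib

/-! Only the `Y_{i+1}`-component of `φ(a) − φ(b)` is needed. Monotonicity of the decomposition
bounds `‖φ(a) − φ(b)‖` below by the norm of that component, which, `E_{i+1}` being an isometry,
is at least `((‖a‖ − p)‖a‖ − (‖b‖ − p)‖b‖)/p` with `p = 2^{i−1}`. The map `t ↦ (t − p)t/p` has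
slope `(2t − p)/p ≥ 1` on `[p, ∞)`, so this is at least `‖a‖ − ‖b‖`. -/

lemma norm_le_norm_add_of_monotone {ι R Y : Type*} [DecidableEq ι] [Semiring R]
    [NormedAddCommGroup Y] [Module R Y] {Ysub : ι → Submodule R Y}
    (hmono : ∀ y : ι → Y, (∀ i, y i ∈ Ysub i) → Summable y → ∀ j, ‖y j‖ ≤ ‖∑' i, y i‖)
    {i j : ι} (hij : i ≠ j) {u v : Y} (hu : u ∈ Ysub i) (hv : v ∈ Ysub j) :
    ‖v‖ ≤ ‖u + v‖ := by
  have hsingle : ∀ {k : ι} {w : Y}, w ∈ Ysub k → ∀ l, (Pi.single k w : ι → Y) l ∈ Ysub l := by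
    intro k w hw l
    rcases eq_or_ne l k with rfl | hlk
    · simpa using hw
    · simp [hlk]
  have hsum : HasSum (Pi.single i u + Pi.single j v) (u + v) :=
    (hasSum_pi_single i u).add (hasSum_pi_single j v)
  have hmem : ∀ l, (Pi.single i u + Pi.single j v : ι → Y) l ∈ Ysub l := fun l => by
    rw [Pi.add_apply]; exact add_mem (hsingle hu l) (hsingle hv l)
  have h := hmono _ hmem hsum.summable j
  rwa [hsum.tsum_eq, Pi.add_apply, Pi.single_eq_of_ne hij.symm, Pi.single_eq_same, zero_add] at h

lemma mul_norm_sub_mul_norm_le_norm_smul_sub_smul {Y : Type*} [NormedAddCommGroup Y]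
    [NormedSpace ℝ Y] {s t : ℝ} (hs : 0 ≤ s) (ht : 0 ≤ t) (x y : Y) :
    s * ‖x‖ - t * ‖y‖ ≤ ‖s • x - t • y‖ := by
  simpa only [norm_smul_of_nonneg hs, norm_smul_of_nonneg ht] using norm_sub_norm_le (s • x) (t • y)

lemma sub_le_div_mul_sub_div_mul {p α β : ℝ} (hp : 0 < p) (hβ : p ≤ β) (hβα : β ≤ α) :
    α - β ≤ (α - p) / p * α - (β - p) / p * β := by
  rw [div_mul_eq_mul_div, div_mul_eq_mul_div, ← sub_div, le_div_iff₀ hp]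
  nlinarith [sub_nonneg.mpr hβα]

theorem gluing_same_shell_lower_bound {Z Y : Type*}
    [NormedAddCommGroup Z] [NormedSpace ℝ Z]
    [NormedAddCommGroup Y] [NormedSpace ℝ Y]
    (Zsub : ℤ → Submodule ℝ Z)
    (Ysub : ℤ → Submodule ℝ Y)
    (hmono : ∀ y : ℤ → Y, (∀ i, y i ∈ Ysub i) → Summable y →
      ∀ j : ℤ, ‖y j‖ ≤ ‖∑' i, y i‖)
    (E : ∀ i : ℤ, (Zsub i) →ₗ[ℝ] Y)
    (hEiso : ∀ (i : ℤ) (z : Zsub i), ‖E i z‖ = ‖(z : Z)‖)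
    (hErange : ∀ (i : ℤ) (z : Zsub i), E i z ∈ Ysub i)
    (φ : Z → Y) (a b : Z) (i : ℤ)
    (ha1 : (2:ℝ) ^ (i - 1) ≤ ‖a‖)
    (hb1 : (2:ℝ) ^ (i - 1) ≤ ‖b‖)
    (hba : ‖b‖ ≤ ‖a‖) (hfar : ‖a - b‖ / 5 ≤ ‖a‖ - ‖b‖)
    (haZ : a ∈ Zsub i) (haZ' : a ∈ Zsub (i + 1))
    (hbZ : b ∈ Zsub i) (hbZ' : b ∈ Zsub (i + 1))
    (hφa : φ a = (((2:ℝ) ^ i - ‖a‖) / (2:ℝ) ^ (i - 1)) • E i ⟨a, haZ⟩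
        + ((‖a‖ - (2:ℝ) ^ (i - 1)) / (2:ℝ) ^ (i - 1)) • E (i + 1) ⟨a, haZ'⟩)
    (hφb : φ b = (((2:ℝ) ^ i - ‖b‖) / (2:ℝ) ^ (i - 1)) • E i ⟨b, hbZ⟩
        + ((‖b‖ - (2:ℝ) ^ (i - 1)) / (2:ℝ) ^ (i - 1)) • E (i + 1) ⟨b, hbZ'⟩) :
    ‖a‖ - ‖b‖ ≤ ‖φ a - φ b‖ ∧ ‖a - b‖ / 5 ≤ ‖φ a - φ b‖ := by
  set p : ℝ := (2:ℝ) ^ (i - 1)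
  have hp : 0 < p := by positivity
  set u : Y := ((2 ^ i - ‖a‖) / p) • E i ⟨a, haZ⟩ - ((2 ^ i - ‖b‖) / p) • E i ⟨b, hbZ⟩
  set v : Y := ((‖a‖ - p) / p) • E (i + 1) ⟨a, haZ'⟩ - ((‖b‖ - p) / p) • E (i + 1) ⟨b, hbZ'⟩
  have hsplit : φ a - φ b = u + v := by simp only [u, v, hφa, hφb]; abel
  have hu : u ∈ Ysub i :=
    sub_mem (Submodule.smul_mem _ _ (hErange _ _)) (Submodule.smul_mem _ _ (hErange _ _))
  have hv : v ∈ Ysub (i + 1) :=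
    sub_mem (Submodule.smul_mem _ _ (hErange _ _)) (Submodule.smul_mem _ _ (hErange _ _))
  have hv_le : ‖v‖ ≤ ‖φ a - φ b‖ :=
    hsplit ▸ norm_le_norm_add_of_monotone hmono (by omega) hu hv
  have hv_ge : (‖a‖ - p) / p * ‖a‖ - (‖b‖ - p) / p * ‖b‖ ≤ ‖v‖ := by
    have h := mul_norm_sub_mul_norm_le_norm_smul_sub_smul
      (div_nonneg (sub_nonneg.mpr ha1) hp.le) (div_nonneg (sub_nonneg.mpr hb1) hp.le)
      (E (i + 1) ⟨a, haZ'⟩) (E (i + 1) ⟨b, hbZ'⟩)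
    rwa [hEiso, hEiso] at h
  have hmain : ‖a‖ - ‖b‖ ≤ ‖φ a - φ b‖ :=
    (sub_le_div_mul_sub_div_mul hp hb1 hba).trans (hv_ge.trans hv_le)
  exact ⟨hmain, hfar.trans hmain⟩
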